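/- For a fixed direction ζ ∈ S¹, any simple closed C² curve in the plane arising as a regular level set and having no degenerate ζ-tangencies (i.e., no ζ-tangent inflection points) must have an even, positive number of ζ-tangencies. -/

import Mathlib

open Set Metric

noncomputable def pd1 (g : ℝ × ℝ → ℝ) (p : ℝ × ℝ) : ℝ := fderiv ℝ g p (1, 0)

noncomputable def pd2 (g : ℝ × ℝ → ℝ) (p : ℝ × ℝ) : ℝ := fderiv ℝ g p (0, 1)

noncomputable def jacDet (g h : ℝ × ℝ → ℝ) (p : ℝ × ℝ) : ℝ :=
  pd1 g p * pd2 h p - pd2 g p * pd1 h p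

/-- A subset of the plane is a (C²) simple closed curve if it is the image of an injective
(on a period) periodic regular C² curve. -/
def IsSimpleClosedCurve (γ : Set (ℝ × ℝ)) : Prop :=
  ∃ f : ℝ → ℝ × ℝ, ContDiff ℝ 2 f ∧ Function.Periodic f 1 ∧
    Set.InjOn f (Set.Ico (0 : ℝ) 1) ∧ (∀ t, deriv f t ≠ 0) ∧ γ = Set.range f

section Aux
open Filter Topology

variable {φ : ℝ → ℝ} {c u : ℝ}

/-- constant sign on an interval with no zeros -/
lemma aux_ivt_sign (hc : Continuous φ) {x y : ℝ} (hxy : x ≤ y)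
    (hne : ∀ t ∈ Icc x y, φ t ≠ 0) : (0 < φ x ↔ 0 < φ y) := by
  constructor
  · intro hx
    by_contra hy
    have hy' : φ y < 0 := lt_of_le_of_ne (not_lt.1 hy) (hne y (by simp [hxy]))
    obtain ⟨t, ht, h0⟩ := intermediate_value_Icc' hxy hc.continuousOn
      (show (0:ℝ) ∈ Icc (φ y) (φ x) from ⟨hy'.le, hx.le⟩)
    exact hne t ht h0
  · intro hy
    by_contra hx
    have hx' : φ x < 0 := lt_of_le_of_ne (not_lt.1 hx) (hne x (by simp [hxy]))
    obtain ⟨t, ht, h0⟩ := intermediate_value_Icc hxy hc.continuousOn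
      (show (0:ℝ) ∈ Icc (φ x) (φ y) from ⟨hx'.le, hy.le⟩)
    exact hne t ht h0

lemma aux_slope_left (hφ : HasDerivAt φ (deriv φ c) c) (h0 : φ c = 0)
    (hu : u < c) (hpos : ∀ s ∈ Ioo u c, 0 ≤ φ s) : deriv φ c ≤ 0 := by
  have hs : Tendsto (slope φ c) (𝓝[<] c) (𝓝 (deriv φ c)) :=
    (hasDerivAt_iff_tendsto_slope.1 hφ).mono_left
      (nhdsWithin_mono _ (fun s hs => ne_of_lt hs))
  refine le_of_tendsto hs ?_
  filter_upwards [Ioo_mem_nhdsLT_of_mem ⟨hu, le_refl c⟩] with s hs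
  have : slope φ c s = φ s / (s - c) := by simp [slope, h0, div_eq_inv_mul]
  rw [this]
  exact div_nonpos_of_nonneg_of_nonpos (hpos s hs) (by linarith [hs.2])

lemma aux_slope_right (hφ : HasDerivAt φ (deriv φ c) c) (h0 : φ c = 0)
    (hu : c < u) (hpos : ∀ s ∈ Ioo c u, 0 ≤ φ s) : 0 ≤ deriv φ c := by
  have hs : Tendsto (slope φ c) (𝓝[>] c) (𝓝 (deriv φ c)) :=
    (hasDerivAt_iff_tendsto_slope.1 hφ).mono_left
      (nhdsWithin_mono _ (fun s hs => ne_of_gt hs))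
  refine ge_of_tendsto hs ?_
  filter_upwards [Ioo_mem_nhdsGT_of_mem ⟨le_refl c, hu⟩] with s hs
  have : slope φ c s = φ s / (s - c) := by simp [slope, h0, div_eq_inv_mul]
  rw [this]
  exact div_nonneg (hpos s hs) (by linarith [hs.1])

/-- just right of a simple zero, the sign of φ is the sign of the derivative -/
lemma aux_eventually_right (hφ : HasDerivAt φ (deriv φ c) c) (h0 : φ c = 0) :
    ∀ᶠ s in 𝓝[>] c, (deriv φ c ≠ 0 → φ s ≠ 0) ∧ (0 < deriv φ c → 0 < φ s) ∧
      (deriv φ c < 0 → φ s < 0) := by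
  have hs : Tendsto (slope φ c) (𝓝[>] c) (𝓝 (deriv φ c)) :=
    (hasDerivAt_iff_tendsto_slope.1 hφ).mono_left
      (nhdsWithin_mono _ (fun s hs => ne_of_gt hs))
  rcases eq_or_ne (deriv φ c) 0 with h | h
  · filter_upwards with s; simp [h]
  · have : ∀ᶠ s in 𝓝[>] c, slope φ c s ≠ 0 ∧ (0 < deriv φ c → 0 < slope φ c s) ∧
        (deriv φ c < 0 → slope φ c s < 0) := by
      rcases h.lt_or_gt with hlt | hgt
      · filter_upwards [hs (Iio_mem_nhds hlt)] with s hsl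
        exact ⟨ne_of_lt hsl, fun hp => absurd hp (not_lt.2 hlt.le), fun _ => hsl⟩
      · filter_upwards [hs (Ioi_mem_nhds hgt)] with s hsl
        exact ⟨ne_of_gt hsl, fun _ => hsl, fun hn => absurd hn (not_lt.2 hgt.le)⟩
    filter_upwards [this, self_mem_nhdsWithin] with s ⟨h1, h2, h3⟩ hmem
    have hsc : (0:ℝ) < s - c := by simpa [sub_pos] using (hmem : c < s)
    have hval : φ s = slope φ c s * (s - c) := by
      rw [slope_def_field, h0, sub_zero, div_mul_cancel₀ _ hsc.ne']
    refine ⟨fun _ => ?_, fun hp => ?_, fun hn => ?_⟩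
    · rw [hval]; exact mul_ne_zero h1 (ne_of_gt hsc)
    · rw [hval]; exact mul_pos (h2 hp) hsc
    · rw [hval]; exact mul_neg_of_neg_of_pos (h3 hn) hsc

lemma aux_isolated (hφ : HasDerivAt φ (deriv φ c) c) (h0 : φ c = 0)
    (hd : deriv φ c ≠ 0) : ∀ᶠ s in 𝓝[≠] c, φ s ≠ 0 := by
  have hs : Tendsto (slope φ c) (𝓝[≠] c) (𝓝 (deriv φ c)) :=
    hasDerivAt_iff_tendsto_slope.1 hφ
  filter_upwards [hs (compl_singleton_mem_nhds hd), self_mem_nhdsWithin] with s h1 h2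
  intro hz
  apply h1
  simp [slope, hz, h0]

lemma aux_slope_left' (hφ : HasDerivAt φ (deriv φ c) c) (h0 : φ c = 0)
    (hu : u < c) (hneg : ∀ s ∈ Ioo u c, φ s ≤ 0) : 0 ≤ deriv φ c := by
  have hs : Tendsto (slope φ c) (𝓝[<] c) (𝓝 (deriv φ c)) :=
    (hasDerivAt_iff_tendsto_slope.1 hφ).mono_left
      (nhdsWithin_mono _ (fun s hs => ne_of_lt hs))
  refine ge_of_tendsto hs ?_
  filter_upwards [Ioo_mem_nhdsLT_of_mem ⟨hu, le_refl c⟩] with s hs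
  have : slope φ c s = φ s / (s - c) := by simp [slope, h0, div_eq_inv_mul]
  rw [this]
  exact div_nonneg_of_nonpos (hneg s hs) (by linarith [hs.2])

lemma aux_parity (φ : ℝ → ℝ) (hφ : Differentiable ℝ φ)
    (hsimp : ∀ t, φ t = 0 → deriv φ t ≠ 0) :
    ∀ (n : ℕ) (Z : Finset ℝ) (a b : ℝ), Z.card = n → a < b → φ a ≠ 0 → φ b ≠ 0 →
      (∀ t, t ∈ Set.Ioo a b → (φ t = 0 ↔ t ∈ Z)) →
      (↑Z ⊆ Set.Ioo a b) →
      ((0 < φ a ↔ 0 < φ b) ↔ Even Z.card) := by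
  intro n
  induction n with
  | zero =>
    intro Z a b hcard hab ha hb hiff _
    have hZ : Z = ∅ := Finset.card_eq_zero.1 hcard
    have hne : ∀ t ∈ Icc a b, φ t ≠ 0 := by
      intro t ht h0
      rcases eq_or_lt_of_le ht.1 with rfl | h1
      · exact ha h0
      rcases eq_or_lt_of_le ht.2 with rfl | h2
      · exact hb h0
      have := (hiff t ⟨h1, h2⟩).1 h0
      simp [hZ] at this
    simp [hcard, aux_ivt_sign hφ.continuous hab.le hne]
  | succ n ih =>
    intro Z a b hcard hab ha hb hiff hsub
    have hZne : Z.Nonempty := Finset.card_pos.1 (by omega)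
    set t₁ := Z.min' hZne with ht₁def
    have ht₁Z : t₁ ∈ Z := Z.min'_mem hZne
    have ht₁ab : t₁ ∈ Set.Ioo a b := hsub ht₁Z
    have hz : φ t₁ = 0 := (hiff t₁ ht₁ab).2 ht₁Z
    have hd : deriv φ t₁ ≠ 0 := hsimp t₁ hz
    have hder : HasDerivAt φ (deriv φ t₁) t₁ := (hφ t₁).hasDerivAt
    set Z' := Z.erase t₁ with hZ'def
    have hcard' : Z'.card = n := by
      rw [hZ'def, Finset.card_erase_of_mem ht₁Z, hcard]; omega
    -- the cut point m
    set m : ℝ := if h : Z'.Nonempty then min (Z'.min' h) b else b with hmdef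
    have hmb : m ≤ b := by
      rw [hmdef]; split
      · exact min_le_right _ _
      · exact le_refl b
    have hm3 : ∀ t ∈ Z', m ≤ t := by
      intro t ht
      rw [hmdef, dif_pos ⟨t, ht⟩]
      exact le_trans (min_le_left _ _) (Finset.min'_le _ _ ht)
    have hm1 : t₁ < m := by
      rw [hmdef]; split
      case isTrue h =>
        refine lt_min ?_ ht₁ab.2
        have hmem : Z'.min' h ∈ Z' := Z'.min'_mem h
        have h1 : Z'.min' h ≠ t₁ := Finset.ne_of_mem_erase hmem
        have h2 : t₁ ≤ Z'.min' h := Z.min'_le _ (Finset.mem_of_mem_erase hmem)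
        exact lt_of_le_of_ne h2 (Ne.symm h1)
      case isFalse h => exact ht₁ab.2
    -- no zeros strictly left of t₁ (within [a, t₁))
    have hNoLeft : ∀ s ∈ Set.Ico a t₁, φ s ≠ 0 := by
      intro s hs h0
      rcases eq_or_lt_of_le hs.1 with rfl | h1
      · exact ha h0
      have hsZ : s ∈ Z := (hiff s ⟨h1, hs.2.trans ht₁ab.2⟩).1 h0
      exact absurd (Z.min'_le _ hsZ) (not_le.2 hs.2)
    have hsignLeft : ∀ s ∈ Set.Ico a t₁, (0 < φ a ↔ 0 < φ s) := by
      intro s hs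
      refine aux_ivt_sign hφ.continuous hs.1 ?_
      intro t ht
      exact hNoLeft t ⟨ht.1, lt_of_le_of_lt ht.2 hs.2⟩
    -- find a' just right of t₁
    have hexa' : ∃ a', t₁ < a' ∧ a' < m ∧ φ a' ≠ 0 ∧ (0 < φ a' ↔ ¬ (0 < φ a)) := by
    -- derivative sign at t₁ is opposite to sign of φ a
      have hIoo : Set.Ioo t₁ m ∈ 𝓝[>] t₁ := Ioo_mem_nhdsGT_of_mem ⟨le_refl _, hm1⟩
      by_cases hσ : 0 < φ a
      · have hle : deriv φ t₁ ≤ 0 := by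
          refine aux_slope_left hder hz ht₁ab.1 ?_
          intro s hs
          exact le_of_lt ((hsignLeft s ⟨hs.1.le, hs.2⟩).1 hσ)
        have hneg : deriv φ t₁ < 0 := lt_of_le_of_ne hle hd
        obtain ⟨a', h1, h2⟩ := ((aux_eventually_right hder hz).and hIoo).exists
        have hneg' : φ a' < 0 := h1.2.2 hneg
        exact ⟨a', h2.1, h2.2, ne_of_lt hneg',
          ⟨fun hp => absurd hp (not_lt.2 hneg'.le), fun hn => absurd hσ hn⟩⟩
      · have hle : 0 ≤ deriv φ t₁ := by
          refine aux_slope_left' hder hz ht₁ab.1 ?_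
          intro s hs
          have := (hsignLeft s ⟨hs.1.le, hs.2⟩)
          exact not_lt.1 (fun hp => hσ (this.2 hp))
        have hpos : 0 < deriv φ t₁ := lt_of_le_of_ne hle (Ne.symm hd)
        obtain ⟨a', h1, h2⟩ := ((aux_eventually_right hder hz).and hIoo).exists
        have hpos' : 0 < φ a' := h1.2.1 hpos
        exact ⟨a', h2.1, h2.2, ne_of_gt hpos', ⟨fun _ => hσ, fun _ => hpos'⟩⟩
    obtain ⟨a', ht₁a', ha'm, ha'ne, ha'sign⟩ := hexa'
    have ha'b : a' < b := lt_of_lt_of_le ha'm hmb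
    have haa' : a < a' := ht₁ab.1.trans ht₁a'
    have hiff' : ∀ t, t ∈ Set.Ioo a' b → (φ t = 0 ↔ t ∈ Z') := by
      intro t ht
      constructor
      · intro h0
        have htZ : t ∈ Z := (hiff t ⟨haa'.trans ht.1, ht.2⟩).1 h0
        exact Finset.mem_erase.2 ⟨ne_of_gt (ht₁a'.trans ht.1), htZ⟩
      · intro htZ'
        exact (hiff t (hsub (Finset.mem_of_mem_erase htZ'))).2 (Finset.mem_of_mem_erase htZ')
    have hsub' : ↑Z' ⊆ Set.Ioo a' b := by
      intro t ht
      have htZ' : t ∈ Z' := ht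
      exact ⟨lt_of_lt_of_le ha'm (hm3 t htZ'), (hsub (Finset.mem_of_mem_erase htZ')).2⟩
    have hIH := ih Z' a' b hcard' ha'b ha'ne hb hiff' hsub'
    rw [hcard', ] at hIH
    rw [hcard, Nat.even_add_one, ← hIH]
    constructor
    · intro h1 h2
      tauto
    · intro h1
      tauto

lemma aux_finite (hφ : Differentiable ℝ φ)
    (hsimp : ∀ t, φ t = 0 → deriv φ t ≠ 0) (a b : ℝ) :
    {t | t ∈ Set.Icc a b ∧ φ t = 0}.Finite := by
  have hclosed : IsClosed {t | t ∈ Set.Icc a b ∧ φ t = 0} := by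
    have heq : {t | t ∈ Set.Icc a b ∧ φ t = 0} = Set.Icc a b ∩ φ ⁻¹' {0} := rfl
    rw [heq]
    exact isClosed_Icc.inter (isClosed_singleton.preimage hφ.continuous)
  have hcomp : IsCompact {t | t ∈ Set.Icc a b ∧ φ t = 0} :=
    isCompact_Icc.of_isClosed_subset hclosed (fun t ht => ht.1)
  refine hcomp.finite ?_
  rw [isDiscrete_iff_discreteTopology, discreteTopology_subtype_iff]
  intro x hx
  rw [Filter.inf_principal_eq_bot]
  filter_upwards [aux_isolated (hφ x).hasDerivAt hx.2 (hsimp x hx.2)] with s hs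
  exact fun hsS => hs hsS.2

lemma clm_expand (L : ℝ × ℝ →L[ℝ] ℝ) (v : ℝ × ℝ) :
    L v = v.1 * L (1, 0) + v.2 * L (0, 1) := by
  have hv : v = v.1 • ((1:ℝ), (0:ℝ)) + v.2 • ((0:ℝ), (1:ℝ)) := by
    ext <;> simp
  rw [hv, map_add, map_smul, map_smul, smul_eq_mul, smul_eq_mul]
  congr 1 <;> congr 1 <;> rw [← hv]

lemma det_zero_of_common_kernel {a1 a2 b1 b2 v1 v2 : ℝ}
    (h1 : v1 * a1 + v2 * a2 = 0) (h2 : v1 * b1 + v2 * b2 = 0)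
    (hv : ¬ (v1 = 0 ∧ v2 = 0)) : a1 * b2 - a2 * b1 = 0 := by
  have k1 : (a1 * b2 - a2 * b1) * v1 = 0 := by linear_combination b2 * h1 - a2 * h2
  have k2 : (a1 * b2 - a2 * b1) * v2 = 0 := by linear_combination a1 * h2 - b1 * h1
  rcases mul_eq_zero.1 k1 with h | h
  · exact h
  rcases mul_eq_zero.1 k2 with h' | h'
  · exact h'
  exact absurd ⟨h, h'⟩ hv

lemma tangency_of_parallel {a1 a2 v1 v2 z1 z2 : ℝ}
    (e1 : v1 * a1 + v2 * a2 = 0) (e2 : v2 * z1 - v1 * z2 = 0)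
    (hv : ¬ (v1 = 0 ∧ v2 = 0)) : z1 * a1 + z2 * a2 = 0 := by
  have k1 : (z1 * a1 + z2 * a2) * v1 = 0 := by linear_combination z1 * e1 - a2 * e2
  have k2 : (z1 * a1 + z2 * a2) * v2 = 0 := by linear_combination z2 * e1 + a1 * e2
  rcases mul_eq_zero.1 k1 with h | h
  · exact h
  rcases mul_eq_zero.1 k2 with h' | h'
  · exact h'
  exact absurd ⟨h, h'⟩ hv

lemma periodic_injOn_shift {α : Type*} {f : ℝ → α} (hper : Function.Periodic f 1)
    (hinj : Set.InjOn f (Set.Ico 0 1)) (a : ℝ) : Set.InjOn f (Set.Ico a (a + 1)) := by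
  intro s hs t ht hst
  have hfs : f (Int.fract s) = f s := by
    rw [Int.fract]
    have := hper.sub_zsmul_eq (x := s) ⌊s⌋; rw [zsmul_eq_mul, mul_one] at this; exact this
  have hft : f (Int.fract t) = f t := by
    rw [Int.fract]
    have := hper.sub_zsmul_eq (x := t) ⌊t⌋; rw [zsmul_eq_mul, mul_one] at this; exact this
  have h1 : Int.fract s = Int.fract t :=
    hinj ⟨Int.fract_nonneg s, Int.fract_lt_one s⟩ ⟨Int.fract_nonneg t, Int.fract_lt_one t⟩
      (by rw [hfs, hft, hst])
  have h3 : s - t = ((⌊s⌋ - ⌊t⌋ : ℤ) : ℝ) := by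
    unfold Int.fract at h1
    push_cast
    linarith
  have h4 : |((⌊s⌋ - ⌊t⌋ : ℤ) : ℝ)| < 1 := by
    rw [← h3, abs_lt]
    constructor <;> [linarith [hs.1, hs.2, ht.1, ht.2]; linarith [hs.1, hs.2, ht.1, ht.2]]
  have h5 : ⌊s⌋ - ⌊t⌋ = 0 := by
    rw [← Int.abs_lt_one_iff]
    exact_mod_cast h4
  have : s - t = 0 := by rw [h3, h5]; simp
  linarith

end Aux

/-- for a fixed direction `ζ`, a simple closed C² curve arising as a component of
a regular level set, all of whose `ζ`-tangencies are non-degenerate, has an even and positive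
number of `ζ`-tangencies. A `ζ`-tangency is a point `u` of the curve with `ζ · ∇g(u) = 0`;
it is non-degenerate when `det [∇g(u), ∇(ζ·∇g)(u)] ≠ 0`. -/
theorem stmt_2 (g : ℝ × ℝ → ℝ) (hg : ContDiff ℝ 2 g)
    (ζ : ℝ × ℝ) (hζ : ‖ζ‖ = 1)
    (hreg : ∀ p, g p = 0 → fderiv ℝ g p ≠ 0)
    (γ : Set (ℝ × ℝ)) (p₀ : ℝ × ℝ) (hp₀ : g p₀ = 0)
    (hγ : γ = connectedComponentIn (g ⁻¹' {0}) p₀)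
    (hsimple : IsSimpleClosedCurve γ)
    (hnondeg : ∀ u ∈ γ, fderiv ℝ g u ζ = 0 →
      jacDet g (fun p => fderiv ℝ g p ζ) u ≠ 0) :
    ({u ∈ γ | fderiv ℝ g u ζ = 0}).Finite ∧
      Even ({u ∈ γ | fderiv ℝ g u ζ = 0}).ncard ∧
      0 < ({u ∈ γ | fderiv ℝ g u ζ = 0}).ncard := by
  classical
  obtain ⟨f, hf2, hper, hinj, hf', hγr⟩ := hsimple
  set h : ℝ × ℝ → ℝ := fun p => fderiv ℝ g p ζ with hh
  have hh1 : ContDiff ℝ 1 h := by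
    have h1 : ContDiff ℝ 1 (fderiv ℝ g) := hg.fderiv_right (by norm_num)
    exact (ContinuousLinearMap.apply ℝ ℝ ζ).contDiff.comp h1
  have hfd : Differentiable ℝ f := hf2.differentiable (by norm_num)
  have hhd : Differentiable ℝ h := hh1.differentiable one_ne_zero
  set φ : ℝ → ℝ := fun t => h (f t) with hφdef
  have hφd : Differentiable ℝ φ := hhd.comp hfd
  have hφper : Function.Periodic φ 1 := fun t => by
    simp only [hφdef]; rw [hper t]
  have hγsub : γ ⊆ g ⁻¹' {0} := hγ ▸ connectedComponentIn_subset _ _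
  have hgf : ∀ t, g (f t) = 0 := fun t => by
    have : f t ∈ γ := hγr ▸ Set.mem_range_self t
    simpa using hγsub this
  have htang : ∀ t, fderiv ℝ g (f t) (deriv f t) = 0 := by
    intro t
    have hcomp : HasDerivAt (fun s => g (f s)) (fderiv ℝ g (f t) (deriv f t)) t :=
      (hg.differentiable (by norm_num) (f t)).hasFDerivAt.comp_hasDerivAt t (hfd t).hasDerivAt
    have heq : (fun s => g (f s)) = fun _ => (0:ℝ) := funext hgf
    rw [heq] at hcomp
    simpa using hcomp.unique (hasDerivAt_const t 0)
  have hvne : ∀ t, ¬ ((deriv f t).1 = 0 ∧ (deriv f t).2 = 0) := by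
    intro t hc
    exact hf' t (Prod.ext hc.1 hc.2)
  have hφderiv : ∀ t, HasDerivAt φ (fderiv ℝ h (f t) (deriv f t)) t := fun t =>
    (hhd (f t)).hasFDerivAt.comp_hasDerivAt t (hfd t).hasDerivAt
  -- all zeros of φ are simple
  have hsimp : ∀ t, φ t = 0 → deriv φ t ≠ 0 := by
    intro t h0 hderiv0
    have hu : f t ∈ γ := hγr ▸ Set.mem_range_self t
    have hjac : jacDet g h (f t) ≠ 0 := hnondeg (f t) hu h0
    rw [(hφderiv t).deriv] at hderiv0
    have e1 := htang t
    rw [clm_expand] at e1 hderiv0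
    refine hjac ?_
    show pd1 g (f t) * pd2 h (f t) - pd2 g (f t) * pd1 h (f t) = 0
    unfold pd1 pd2
    exact det_zero_of_common_kernel e1 hderiv0 (hvne t)
  -- existence of a tangency
  set ψ : ℝ → ℝ := fun t => (f t).2 * ζ.1 - (f t).1 * ζ.2 with hψdef
  have hψper : Function.Periodic ψ 1 := fun t => by
    simp only [hψdef]; rw [hper t]
  have hψcont : Continuous ψ :=
    (hf2.continuous.snd.mul continuous_const).sub (hf2.continuous.fst.mul continuous_const)
  have hψd : ∀ t, HasDerivAt ψ ((deriv f t).2 * ζ.1 - (deriv f t).1 * ζ.2) t := by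
    intro t
    have h1 : HasDerivAt (fun s => (f s).1) (deriv f t).1 t :=
      (ContinuousLinearMap.fst ℝ ℝ ℝ).hasFDerivAt.comp_hasDerivAt t (hfd t).hasDerivAt
    have h2 : HasDerivAt (fun s => (f s).2) (deriv f t).2 t :=
      (ContinuousLinearMap.snd ℝ ℝ ℝ).hasFDerivAt.comp_hasDerivAt t (hfd t).hasDerivAt
    exact (h2.mul_const _).sub (h1.mul_const _)
  obtain ⟨t₀, ht₀mem, ht₀max⟩ := isCompact_Icc.exists_isMaxOn
    (Set.nonempty_Icc.2 zero_le_one) hψcont.continuousOn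
  have hmax : IsLocalMax ψ t₀ := by
    refine Filter.Eventually.of_forall ?_
    intro s
    obtain ⟨y, hy, hsy⟩ := hψper.exists_mem_Ico₀ one_pos s
    rw [hsy]
    exact ht₀max ⟨hy.1, hy.2.le⟩
  have hd0 : (deriv f t₀).2 * ζ.1 - (deriv f t₀).1 * ζ.2 = 0 := by
    have := hmax.deriv_eq_zero
    rw [(hψd t₀).deriv] at this
    exact this
  have hφt₀ : φ t₀ = 0 := by
    have e1 := htang t₀
    rw [clm_expand] at e1
    show fderiv ℝ g (f t₀) ζ = 0
    rw [clm_expand]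
    exact tangency_of_parallel e1 hd0 (hvne t₀)
  -- choose a base point with φ a ≠ 0
  have hdne : deriv φ t₀ ≠ 0 := hsimp t₀ hφt₀
  obtain ⟨a, ha⟩ := (aux_eventually_right (hφd t₀).hasDerivAt hφt₀).exists
  have haφ : φ a ≠ 0 := ha.1 hdne
  have hbφ : φ (a + 1) ≠ 0 := by rw [hφper a]; exact haφ
  have hba : φ (a + 1) = φ a := hφper a
  -- the zero set in a period window
  set Zoo : Set ℝ := {t | t ∈ Set.Ioo a (a + 1) ∧ φ t = 0} with hZoo
  have hZfin : Zoo.Finite :=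
    (aux_finite hφd hsimp a (a + 1)).subset
      (fun t ht => ⟨⟨ht.1.1.le, ht.1.2.le⟩, ht.2⟩)
  set Z : Finset ℝ := hZfin.toFinset with hZ
  have hmemZ : ∀ t, t ∈ Z ↔ t ∈ Set.Ioo a (a + 1) ∧ φ t = 0 := by
    intro t; rw [hZ, Set.Finite.mem_toFinset]; rfl
  have hiffZ : ∀ t, t ∈ Set.Ioo a (a + 1) → (φ t = 0 ↔ t ∈ Z) := by
    intro t ht
    rw [hmemZ]
    exact ⟨fun h0 => ⟨ht, h0⟩, fun hc => hc.2⟩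
  have hsubZ : ↑Z ⊆ Set.Ioo a (a + 1) := fun t ht => ((hmemZ t).1 ht).1
  have hEven : Even Z.card := by
    have := aux_parity φ hφd hsimp Z.card Z a (a + 1) rfl (by linarith) haφ hbφ hiffZ hsubZ
    exact this.1 (by rw [hba])
  -- identify the tangency set with f '' Zoo
  have hSeq : {u ∈ γ | fderiv ℝ g u ζ = 0} = f '' Zoo := by
    ext u
    constructor
    · rintro ⟨huγ, hu0⟩
      rw [hγr] at huγ
      obtain ⟨t, rfl⟩ := huγ
      obtain ⟨y, hy, hty⟩ := hper.exists_mem_Ico one_pos t a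
      have hφy : φ y = 0 := by
        show h (f y) = 0
        rw [← hty]
        exact hu0
      have hya : y ≠ a := fun hc => haφ (hc ▸ hφy)
      exact ⟨y, ⟨⟨lt_of_le_of_ne hy.1 (Ne.symm hya), hy.2⟩, hφy⟩, hty.symm⟩
    · rintro ⟨t, ⟨htIoo, ht0⟩, rfl⟩
      exact ⟨hγr ▸ Set.mem_range_self t, ht0⟩
  have hinj' : Set.InjOn f (Set.Ico a (a + 1)) := periodic_injOn_shift hper hinj a
  have hZooIco : Zoo ⊆ Set.Ico a (a + 1) := fun t ht => ⟨ht.1.1.le, ht.1.2⟩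
  have hfinS : ({u ∈ γ | fderiv ℝ g u ζ = 0}).Finite := by
    rw [hSeq]; exact hZfin.image f
  have hncard : ({u ∈ γ | fderiv ℝ g u ζ = 0}).ncard = Zoo.ncard := by
    rw [hSeq]
    exact Set.ncard_image_of_injOn (hinj'.mono hZooIco)
  have hZoocard : Zoo.ncard = Z.card := by
    rw [hZ, Set.ncard_eq_toFinset_card Zoo hZfin]
  refine ⟨hfinS, ?_, ?_⟩
  · rw [hncard, hZoocard]; exact hEven
  · rw [hncard]
    rw [Set.ncard_pos hZfin]
    obtain ⟨y, hy, hφy⟩ := hφper.exists_mem_Ico one_pos t₀ a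
    have hφy0 : φ y = 0 := by rw [← hφy]; exact hφt₀
    have hya : y ≠ a := fun hc => haφ (hc ▸ hφy0)
    exact ⟨y, ⟨⟨lt_of_le_of_ne hy.1 (Ne.symm hya), hy.2⟩, hφy0⟩⟩
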